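/- arXiv:2308.08863 — 3 statements merged into one kernel-verified Lean document; each statement's English description precedes it below -/
import Mathlib

section
/- Let A = √(8/3). Suppose ρ₁, u₁⁽¹⁾, θ₁, φ₁, ρ₂, u₁⁽²⁾, θ₂, φ₂ are smooth real-valued functions of (t,x) ∈ ℝ×ℝ satisfying at every point the first-order relations u₁⁽¹⁾ = Aρ₁, θ₁ = (2/3)ρ₁, φ₁ = ρ₁, together with the four equations: (i) ∂ₜρ₁ − A∂ₓρ₂ + ∂ₓu₁⁽²⁾ + ∂ₓ(ρ₁u₁⁽¹⁾) = 0; (ii) ∂ₜu₁⁽¹⁾ − A∂ₓu₁⁽²⁾ − Aρ₁∂ₓu₁⁽¹⁾ + u₁⁽¹⁾∂ₓu₁⁽¹⁾ + ∂ₓθ₂ + ∂ₓρ₂ + ∂ₓ(ρ₁θ₁) + ∂ₓφ₂ + ρ₁∂ₓφ₁ = 0; (iii) ∂ₜθ₁ − A∂ₓθ₂ + (2/3)∂ₓu₁⁽²⁾ + (2/3)θ₁∂ₓu₁⁽¹⁾ + u₁⁽¹⁾∂ₓθ₁ = 0; (iv) ∂ₓ²φ₁ − φ₂ − (1/2)φ₁²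 + ρ₂ = 0. Then ρ₁ satisfies the Korteweg–de Vries equation 2√(8/3)·∂ₜρ₁ + (58/9)·ρ₁∂ₓρ₁ + ∂ₓ³ρ₁ = 0 at every point. -/
/-!
Substituting `u₁ = Aρ₁`, `θ₁ = (2/3)ρ₁`, `φ₁ = ρ₁` makes (i)–(iii) linear in the second-order
unknowns `∂ₓρ₂, ∂ₓu₂, ∂ₓθ₂, ∂ₓφ₂`, and the `x`-derivative of (iv) supplies `∂ₓ³ρ₁`. Since
`A² = 8/3`, the combination `2·(i) + A·(ii) + (iii) + A·(iv)ₓ` eliminates every second-order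
term and leaves `A` times the KdV equation; as `A ≠ 0` the equation follows.
-/

/-- Partial derivative in `t` of a function of `(t, x) : ℝ × ℝ`. -/
noncomputable def pdt (f : ℝ × ℝ → ℝ) (p : ℝ × ℝ) : ℝ :=
  deriv (fun s => f (s, p.2)) p.1

/-- Partial derivative in `x` of a function of `(t, x) : ℝ × ℝ`. -/
noncomputable def pdx (f : ℝ × ℝ → ℝ) (p : ℝ × ℝ) : ℝ :=
  deriv (fun y => f (p.1, y)) p.2

section PartialDerivatives

variable {f g : ℝ × ℝ → ℝ}

theorem hasDerivAt_pdx (hf : Differentiable ℝ f) (p : ℝ × ℝ) :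
    HasDerivAt (fun y => f (p.1, y)) (pdx f p) p.2 :=
  (hf.comp (differentiable_const p.1 |>.prodMk differentiable_id) p.2).hasDerivAt

theorem pdx_eq_fderiv_apply (hf : Differentiable ℝ f) (p : ℝ × ℝ) :
    pdx f p = fderiv ℝ f p (0, 1) := by
  have hline : HasDerivAt (fun y => ((p.1, y) : ℝ × ℝ)) ((0 : ℝ), (1 : ℝ)) p.2 :=
    (hasDerivAt_const p.2 p.1).prodMk (hasDerivAt_id p.2)
  exact ((hf p).hasFDerivAt.comp_hasDerivAt p.2 hline).deriv

theorem ContDiff.pdx {n : WithTop ℕ∞} (hf : ContDiff ℝ (n + 1) f) :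
    ContDiff ℝ n (_root_.pdx f) := by
  have hd : Differentiable ℝ f := hf.differentiable (by simp)
  rw [show _root_.pdx f = fun p => fderiv ℝ f p (0, 1) from funext (pdx_eq_fderiv_apply hd)]
  exact (hf.fderiv_right le_rfl).clm_apply contDiff_const

theorem pdx_const_mul (c : ℝ) (p : ℝ × ℝ) : pdx (fun q => c * f q) p = c * pdx f p :=
  congrFun (deriv_const_mul_field' (v := fun y => f (p.1, y)) c) p.2

theorem pdt_const_mul (c : ℝ) (p : ℝ × ℝ) : pdt (fun q => c * f q) p = c * pdt f p :=
  congrFun (deriv_const_mul_field' (v := fun s => f (s, p.2)) c) p.1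

theorem pdx_mul (hf : Differentiable ℝ f) (hg : Differentiable ℝ g) (p : ℝ × ℝ) :
    pdx (fun q => f q * g q) p = pdx f p * g p + f p * pdx g p :=
  ((hasDerivAt_pdx hf p).mul (hasDerivAt_pdx hg p)).deriv

end PartialDerivatives

theorem pdx_poisson_eq_zero {ρ φ ρ₂ : ℝ × ℝ → ℝ} (hρ : ContDiff ℝ 3 ρ)
    (hφ : Differentiable ℝ φ) (hρ₂ : Differentiable ℝ ρ₂)
    (h : ∀ p, pdx (pdx ρ) p - φ p - (1 / 2) * ρ p ^ 2 + ρ₂ p = 0) (p : ℝ × ℝ) :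
    pdx (pdx (pdx ρ)) p - pdx φ p - ρ p * pdx ρ p + pdx ρ₂ p = 0 := by
  have hρ'' : Differentiable ℝ (pdx (pdx ρ)) :=
    (hρ.pdx.pdx (n := 1)).differentiable one_ne_zero
  have hρ' : Differentiable ℝ ρ := hρ.differentiable (by norm_num)
  have hderiv := (((hasDerivAt_pdx hρ'' p).sub (hasDerivAt_pdx hφ p)).sub
    (((hasDerivAt_pdx hρ' p).pow 2).const_mul (1 / 2))).add (hasDerivAt_pdx hρ₂ p)
  have hzero := hderiv.unique <| (hasDerivAt_const p.2 (0 : ℝ)).congr_of_eventuallyEq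
    (Filter.Eventually.of_forall fun y => h (p.1, y))
  linear_combination hzero

theorem kdv_from_first_order_expansion_general
    (A : ℝ) (hA : A = Real.sqrt (8 / 3))
    (ρ₁ u₁ θ₁ φ₁ ρ₂ u₂ θ₂ φ₂ : ℝ × ℝ → ℝ)
    (hρ₁ : ContDiff ℝ (⊤ : ℕ∞) ρ₁)
    (hρ₂ : ContDiff ℝ (⊤ : ℕ∞) ρ₂)
    (hφ₂ : ContDiff ℝ (⊤ : ℕ∞) φ₂)
    (rel_u : ∀ p, u₁ p = A * ρ₁ p)
    (rel_θ : ∀ p, θ₁ p = (2 / 3) * ρ₁ p)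
    (rel_φ : ∀ p, φ₁ p = ρ₁ p)
    (eq1 : ∀ p, pdt ρ₁ p - A * pdx ρ₂ p + pdx u₂ p
      + pdx (fun q => ρ₁ q * u₁ q) p = 0)
    (eq2 : ∀ p, pdt u₁ p - A * pdx u₂ p - A * ρ₁ p * pdx u₁ p + u₁ p * pdx u₁ p
      + pdx θ₂ p + pdx ρ₂ p + pdx (fun q => ρ₁ q * θ₁ q) p + pdx φ₂ p
      + ρ₁ p * pdx φ₁ p = 0)
    (eq3 : ∀ p, pdt θ₁ p - A * pdx θ₂ p + (2 / 3) * pdx u₂ p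
      + (2 / 3) * θ₁ p * pdx u₁ p + u₁ p * pdx θ₁ p = 0)
    (eq4 : ∀ p, pdx (pdx φ₁) p - φ₂ p - (1 / 2) * (φ₁ p) ^ 2 + ρ₂ p = 0) :
    ∀ p, 2 * Real.sqrt (8 / 3) * pdt ρ₁ p + (58 / 9) * ρ₁ p * pdx ρ₁ p
      + pdx (pdx (pdx ρ₁)) p = 0 := by
  obtain rfl : u₁ = fun q => A * ρ₁ q := funext rel_u
  obtain rfl : θ₁ = fun q => (2 / 3) * ρ₁ q := funext rel_θ
  obtain rfl : ρ₁ = φ₁ := (funext rel_φ).symm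
  intro p
  have hA2 : A ^ 2 = 8 / 3 := hA ▸ Real.sq_sqrt (by norm_num)
  have hA0 : A ≠ 0 := hA ▸ (Real.sqrt_pos.mpr (by norm_num)).ne'
  have hρ : Differentiable ℝ ρ₁ := hρ₁.differentiable (by simp)
  have h1 := eq1 p
  have h2 := eq2 p
  have h3 := eq3 p
  have h4 := pdx_poisson_eq_zero (contDiff_infty.1 hρ₁ 3) (hφ₂.differentiable (by simp))
    (hρ₂.differentiable (by simp)) eq4 p
  beta_reduce at h1 h2 h3
  rw [pdx_mul hρ (hρ.const_mul _), pdx_const_mul] at h1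
  rw [pdx_mul hρ (hρ.const_mul _), pdt_const_mul, pdx_const_mul, pdx_const_mul] at h2
  rw [pdt_const_mul, pdx_const_mul, pdx_const_mul] at h3
  rw [← hA]
  refine mul_left_cancel₀ hA0 ?_
  linear_combination 2 * h1 + A * h2 + h3 + A * h4 + (pdt ρ₁ p + pdx u₂ p) * hA2

/-- the first KdV profile `ρ₁` satisfies the KdV equation
`2√(8/3)·∂ₜρ₁ + (58/9)·ρ₁∂ₓρ₁ + ∂ₓ³ρ₁ = 0`. -/
theorem kdv_from_first_order_expansion
    (A : ℝ) (hA : A = Real.sqrt (8 / 3))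
    (ρ₁ u₁ θ₁ φ₁ ρ₂ u₂ θ₂ φ₂ : ℝ × ℝ → ℝ)
    (hρ₁ : ContDiff ℝ (⊤ : ℕ∞) ρ₁) (hu₁ : ContDiff ℝ (⊤ : ℕ∞) u₁)
    (hθ₁ : ContDiff ℝ (⊤ : ℕ∞) θ₁) (hφ₁ : ContDiff ℝ (⊤ : ℕ∞) φ₁)
    (hρ₂ : ContDiff ℝ (⊤ : ℕ∞) ρ₂) (hu₂ : ContDiff ℝ (⊤ : ℕ∞) u₂)
    (hθ₂ : ContDiff ℝ (⊤ : ℕ∞) θ₂) (hφ₂ : ContDiff ℝ (⊤ : ℕ∞) φ₂)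
    (rel_u : ∀ p, u₁ p = A * ρ₁ p)
    (rel_θ : ∀ p, θ₁ p = (2 / 3) * ρ₁ p)
    (rel_φ : ∀ p, φ₁ p = ρ₁ p)
    (eq1 : ∀ p, pdt ρ₁ p - A * pdx ρ₂ p + pdx u₂ p
      + pdx (fun q => ρ₁ q * u₁ q) p = 0)
    (eq2 : ∀ p, pdt u₁ p - A * pdx u₂ p - A * ρ₁ p * pdx u₁ p + u₁ p * pdx u₁ p
      + pdx θ₂ p + pdx ρ₂ p + pdx (fun q => ρ₁ q * θ₁ q) p + pdx φ₂ p
      + ρ₁ p * pdx φ₁ p = 0)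
    (eq3 : ∀ p, pdt θ₁ p - A * pdx θ₂ p + (2 / 3) * pdx u₂ p
      + (2 / 3) * θ₁ p * pdx u₁ p + u₁ p * pdx θ₁ p = 0)
    (eq4 : ∀ p, pdx (pdx φ₁) p - φ₂ p - (1 / 2) * (φ₁ p) ^ 2 + ρ₂ p = 0) :
    ∀ p, 2 * Real.sqrt (8 / 3) * pdt ρ₁ p + (58 / 9) * ρ₁ p * pdx ρ₁ p
      + pdx (pdx (pdx ρ₁)) p = 0 :=
  kdv_from_first_order_expansion_general A hA ρ₁ u₁ θ₁ φ₁ ρ₂ u₂ θ₂ φ₂ hρ₁ hρ₂ hφ₂ rel_u rel_θ rel_φ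
    eq1 eq2 eq3 eq4
end

section
/- Let δ > 0 and 0 < a₀ ≤ a₁ be real constants. Let ψ : ℝ → ℝ be twice continuously differentiable, let a : ℝ → ℝ satisfy a₀ ≤ a(x) ≤ a₁ for all x, and let h : ℝ → ℝ. Assume ψ and ψ′ are square-integrable on ℝ, h is square-integrable on ℝ, ψ(x)·ψ′(x) → 0 as x → +∞ and as x → −∞, and −δψ′′(x) + a(x)ψ(x) = h(x) for every x ∈ ℝ. Then (a₀/2)·∫_ℝ ψ(x)² dx + δ·∫_ℝ ψ′(x)² dx ≤ (1/(2a₀))·∫_ℝ h(x)² dx. -/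
open MeasureTheory Filter Topology

/-!
Multiply the equation by `ψ`: since `δ (ψ ψ')' = δ ψ'² + δ ψ ψ'' = δ ψ'² + a ψ² - h ψ`, Young's
inequality `h ψ ≤ h² / (2 a₀) + a₀ ψ² / 2` and `a ≥ a₀` bound the energy density
`a₀ ψ² / 2 + δ ψ'² - h² / (2 a₀)` pointwise by the derivative of `δ ψ ψ'`. Integrating over
`[-R, R]` and letting `R → ∞`, the boundary terms vanish. Only the integrable side of this
inequality is ever integrated, so no measurability of `a` is needed.
-/

theorem integral_le_sub_of_le_hasDerivAt_of_tendsto {f f' g : ℝ → ℝ} {l₁ l₂ : ℝ}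
    (hf : ∀ x, HasDerivAt f (f' x) x) (hg : Integrable g) (hgf : ∀ x, g x ≤ f' x)
    (hbot : Tendsto f atBot (𝓝 l₁)) (htop : Tendsto f atTop (𝓝 l₂)) :
    ∫ x, g x ≤ l₂ - l₁ := by
  have hinterval : ∀ R : ℝ, 0 ≤ R → ∫ x in -R..R, g x ≤ f R - f (-R) := fun R hR =>
    intervalIntegral.integral_le_sub_of_hasDeriv_right_of_le (by linarith)
      (HasDerivAt.continuousOn fun x _ => hf x) (fun x _ => (hf x).hasDerivWithinAt)
      hg.integrableOn fun x _ => hgf x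
  exact le_of_tendsto_of_tendsto
    (intervalIntegral_tendsto_integral hg tendsto_neg_atTop_atBot tendsto_id)
    (htop.sub (hbot.comp tendsto_neg_atTop_atBot))
    ((eventually_ge_atTop 0).mono hinterval)

theorem ContDiff.hasDerivAt_mul_deriv {ψ : ℝ → ℝ} (hψ : ContDiff ℝ 2 ψ) (x : ℝ) :
    HasDerivAt (fun x => ψ x * deriv ψ x) (deriv ψ x ^ 2 + ψ x * deriv (deriv ψ) x) x := by
  have hψ' : Differentiable ℝ (deriv ψ) :=
    ((contDiff_succ_iff_deriv (n := 1)).mp hψ).2.2.differentiable one_ne_zero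
  simpa only [sq] using (hψ.differentiable two_ne_zero x).hasDerivAt.fun_mul (hψ' x).hasDerivAt

theorem screened_energy_density_le {δ a₀ a u v w h : ℝ} (ha₀ : 0 < a₀) (ha : a₀ ≤ a)
    (heq : -δ * w + a * u = h) :
    a₀ / 2 * u ^ 2 + δ * v ^ 2 - 1 / (2 * a₀) * h ^ 2 ≤ δ * (v ^ 2 + u * w) := by
  have young : h * u ≤ 1 / (2 * a₀) * h ^ 2 + a₀ / 2 * u ^ 2 := by
    have hsq : 1 / (2 * a₀) * h ^ 2 + a₀ / 2 * u ^ 2 - h * u = (h - a₀ * u) ^ 2 / (2 * a₀) := by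
      field_simp
      ring
    have : 0 ≤ (h - a₀ * u) ^ 2 / (2 * a₀) := by positivity
    linarith
  have hau : a₀ * u ^ 2 ≤ a * u ^ 2 := mul_le_mul_of_nonneg_right ha (sq_nonneg u)
  have hw : δ * (u * w) = a * u ^ 2 - h * u := by linear_combination (-u) * heq
  linarith

theorem screened_poisson_energy_estimate_general
    (δ a₀ a₁ : ℝ) (ha₀ : 0 < a₀)
    (ψ a h : ℝ → ℝ)
    (hψ : ContDiff ℝ 2 ψ)
    (hbound : ∀ x, a₀ ≤ a x ∧ a x ≤ a₁)
    (hψ2 : Integrable fun x => (ψ x) ^ 2)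
    (hψ'2 : Integrable fun x => (deriv ψ x) ^ 2)
    (hh2 : Integrable fun x => (h x) ^ 2)
    (htop : Tendsto (fun x => ψ x * deriv ψ x) atTop (nhds 0))
    (hbot : Tendsto (fun x => ψ x * deriv ψ x) atBot (nhds 0))
    (heq : ∀ x, -δ * deriv (deriv ψ) x + a x * ψ x = h x) :
    (a₀ / 2) * (∫ x : ℝ, (ψ x) ^ 2) + δ * (∫ x : ℝ, (deriv ψ x) ^ 2)
      ≤ (1 / (2 * a₀)) * ∫ x : ℝ, (h x) ^ 2 := by
  have hψψ' : Integrable fun x => a₀ / 2 * ψ x ^ 2 + δ * deriv ψ x ^ 2 :=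
    (hψ2.const_mul _).add (hψ'2.const_mul _)
  have henergy : ∫ x, (a₀ / 2 * ψ x ^ 2 + δ * deriv ψ x ^ 2 - 1 / (2 * a₀) * h x ^ 2) ≤ 0 := by
    simpa using integral_le_sub_of_le_hasDerivAt_of_tendsto
      (fun x => (hψ.hasDerivAt_mul_deriv x).const_mul δ)
      (hψψ'.sub (hh2.const_mul _))
      (fun x => screened_energy_density_le ha₀ (hbound x).1 (heq x))
      (hbot.const_mul δ) (htop.const_mul δ)
  rw [integral_sub hψψ' (hh2.const_mul _),
    integral_add (hψ2.const_mul _) (hψ'2.const_mul _), integral_const_mul, integral_const_mul,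
    integral_const_mul] at henergy
  linarith

/-- energy estimate for the screened Poisson-type equation
`−δψ'' + aψ = h` on the line. -/
theorem screened_poisson_energy_estimate
    (δ a₀ a₁ : ℝ) (hδ : 0 < δ) (ha₀ : 0 < a₀) (ha₀₁ : a₀ ≤ a₁)
    (ψ a h : ℝ → ℝ)
    (hψ : ContDiff ℝ 2 ψ)
    (hbound : ∀ x, a₀ ≤ a x ∧ a x ≤ a₁)
    (hψ2 : Integrable fun x => (ψ x) ^ 2)
    (hψ'2 : Integrable fun x => (deriv ψ x) ^ 2)
    (hh2 : Integrable fun x => (h x) ^ 2)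
    (htop : Tendsto (fun x => ψ x * deriv ψ x) atTop (nhds 0))
    (hbot : Tendsto (fun x => ψ x * deriv ψ x) atBot (nhds 0))
    (heq : ∀ x, -δ * deriv (deriv ψ) x + a x * ψ x = h x) :
    (a₀ / 2) * (∫ x : ℝ, (ψ x) ^ 2) + δ * (∫ x : ℝ, (deriv ψ x) ^ 2)
      ≤ (1 / (2 * a₀)) * ∫ x : ℝ, (h x) ^ 2 :=
  screened_poisson_energy_estimate_general δ a₀ a₁ ha₀ ψ a h hψ hbound hψ2 hψ'2 hh2 htop hbot heq
end

section
/- Let μ(v) := (2π)^{−3/2}·exp(−|v|²/2) be the global Maxwellian on ℝ³, and for ρ > 0, u ∈ ℝ³, θ > 0 let M_{[ρ,u,θ]}(v) := ρ·(2π(2/3)θ)^{−3/2}·exp(−|v−u|²/(2·(2/3)θ)) be the local Maxwellian with gas constant K = 2/3. For m ∈ ℝ, 0 ≤ q₁ ≤ 1/8 and q₂ > 0 let w(t,v) := ⟨v⟩^{2m}·exp((q₁/(1+t)^{q₂})·⟨v⟩²/2), where ⟨v⟩ := √(1+|v|²). Then for every b ≥ 0, m ∈ ℝ and ϵ ∈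 (0, 1/10] there is a constant C > 0 (depending only on b, m, ϵ, q₁) such that for all t ≥ 0 and all (ρ,u,θ) with 0 < ρ ≤ 2, |u| ≤ 1/2 and |θ − 3/2| ≤ 1/4: ∫_{ℝ³} ⟨v⟩^{2b}·w(t,v)²·μ(v)^{−1}·M_{[ρ,u,θ]}(v)^{2(1−ϵ)} dv ≤ C. -/
/-!
Bounding the polynomial weights by `⟨v⟩ ^ c ≤ exp (|c| |v|)`, the integrand is at most a constant
times `exp (L |v| - (41/280) |v|²)`: the exponential weight contributes at most `exp (⟨v⟩² / 8)`
because `q₁ / (1 + t) ^ q₂ ≤ 1/8`, the inverse global Maxwellian contributes `exp (|v|² / 2)`, and,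
since `2 (1 - ϵ) ≥ 9/5` and `2 (2/3) θ ≤ 7/3`, the power of the local Maxwellian is at most
`2 ^ (2 (1 - ϵ)) exp (-(27/35) (|v|² - |v|))` once `|u| ≤ 1/2`. As `1/8 + 1/2 - 27/35 = -41/280`,
completing the square leaves a Gaussian with explicit integral.
-/

open MeasureTheory Real

noncomputable section

theorem rpow_le_exp_abs_mul_sub_one {x : ℝ} (hx : 1 ≤ x) (c : ℝ) :
    x ^ c ≤ exp (|c| * (x - 1)) := by
  have hx0 : 0 < x := one_pos.trans_le hx
  rw [rpow_def_of_pos hx0, mul_comm, exp_le_exp]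
  calc c * log x ≤ |c| * log x := by gcongr; exacts [log_nonneg hx, le_abs_self c]
    _ ≤ |c| * (x - 1) := by gcongr; exact log_le_sub_one_of_pos hx0

theorem mul_sub_mul_sq_le (L r : ℝ) {c : ℝ} (hc : 0 < c) :
    L * r - c * r ^ 2 ≤ L ^ 2 / (2 * c) - c / 2 * r ^ 2 := by
  rw [← sub_nonneg]
  have h : L ^ 2 / (2 * c) - c / 2 * r ^ 2 - (L * r - c * r ^ 2) = (c * r - L) ^ 2 / (2 * c) := by
    field_simp; ring
  rw [h]; positivity

section

variable {E : Type*} [SeminormedAddCommGroup E]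

def jBracket (v : E) : ℝ := √(1 + ‖v‖ ^ 2)

/-- `a` stands for the time-dependent coefficient `q₁ / (1 + t) ^ q₂`. -/
def velocityWeight (m a : ℝ) (v : E) : ℝ := jBracket v ^ (2 * m) * exp (a * jBracket v ^ 2 / 2)

def globalMaxwellian (v : E) : ℝ := (2 * π) ^ (-(3 / 2) : ℝ) * exp (-‖v‖ ^ 2 / 2)

def localMaxwellian (ρ θ : ℝ) (u v : E) : ℝ :=
  ρ * (2 * π * (2 / 3) * θ) ^ (-(3 / 2) : ℝ) * exp (-‖v - u‖ ^ 2 / (2 * (2 / 3) * θ))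

theorem jBracket_sq (v : E) : jBracket v ^ 2 = 1 + ‖v‖ ^ 2 := sq_sqrt (by positivity)

theorem one_le_jBracket (v : E) : 1 ≤ jBracket v :=
  one_le_sqrt.2 (le_add_of_nonneg_right (by positivity))

theorem jBracket_le_one_add_norm (v : E) : jBracket v ≤ 1 + ‖v‖ :=
  (sqrt_le_left (by positivity)).2 (by nlinarith [norm_nonneg v])

theorem jBracket_rpow_le (v : E) (c : ℝ) : jBracket v ^ c ≤ exp (|c| * ‖v‖) :=
  (rpow_le_exp_abs_mul_sub_one (one_le_jBracket v) c).trans <| by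
    gcongr; linarith [jBracket_le_one_add_norm v]

theorem velocityWeight_sq_le {a : ℝ} (ha : a ≤ 1 / 8) (m : ℝ) (v : E) :
    velocityWeight m a v ^ 2 ≤ exp (|2 * m| * ‖v‖) ^ 2 * exp ((1 + ‖v‖ ^ 2) / 8) := by
  have hexp : exp (a * jBracket v ^ 2 / 2) ^ 2 ≤ exp ((1 + ‖v‖ ^ 2) / 8) := by
    rw [← exp_nat_mul, ← jBracket_sq]
    gcongr
    nlinarith [sq_nonneg (jBracket v)]
  rw [velocityWeight, mul_pow]
  gcongr
  · exact rpow_nonneg (zero_le_one.trans (one_le_jBracket v)) _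
  · exact jBracket_rpow_le v _

theorem globalMaxwellian_inv (v : E) :
    (globalMaxwellian v)⁻¹ = (2 * π) ^ (3 / 2 : ℝ) * exp (‖v‖ ^ 2 / 2) := by
  rw [globalMaxwellian, mul_inv, ← rpow_neg (by positivity), ← exp_neg, neg_neg, neg_div, neg_neg]

theorem norm_sq_sub_norm_le_norm_sub_sq {u : E} (hu : ‖u‖ ≤ 1 / 2) (v : E) :
    ‖v‖ ^ 2 - ‖v‖ ≤ ‖v - u‖ ^ 2 := by
  rcases le_or_gt ‖v‖ (1 / 2) with hv | hv
  · nlinarith [norm_nonneg v, sq_nonneg ‖v - u‖]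
  · have h : ‖v‖ - ‖u‖ ≤ ‖v - u‖ := norm_sub_norm_le v u
    nlinarith [pow_le_pow_left₀ (by linarith) h 2]

theorem localMaxwellian_nonneg {ρ θ : ℝ} (hρ : 0 ≤ ρ) (hθ : 0 ≤ θ) (u v : E) :
    0 ≤ localMaxwellian ρ θ u v := by
  unfold localMaxwellian; positivity

theorem localMaxwellian_rpow_le {ρ θ p : ℝ} {u : E} (hρ0 : 0 ≤ ρ) (hρ2 : ρ ≤ 2)
    (hu : ‖u‖ ≤ 1 / 2) (hθ : |θ - 3 / 2| ≤ 1 / 4) (hp : 9 / 5 ≤ p) (v : E) :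
    localMaxwellian ρ θ u v ^ p ≤ 2 ^ p * exp (-(27 / 35) * (‖v‖ ^ 2 - ‖v‖)) := by
  obtain ⟨hθl, hθu⟩ := abs_le.1 hθ
  have hθ0 : 0 < θ := by linarith
  have hp0 : 0 ≤ p := by linarith
  have hT : 0 < 2 * (2 / 3) * θ := by positivity
  have hρp : ρ ^ p ≤ 2 ^ p := rpow_le_rpow hρ0 hρ2 hp0
  have hnorm : ((2 * π * (2 / 3) * θ) ^ (-(3 / 2) : ℝ)) ^ p ≤ 1 :=
    rpow_le_one (by positivity)
      (rpow_le_one_of_one_le_of_nonpos (by nlinarith [pi_gt_three]) (by norm_num)) hp0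
  have hexp : -‖v - u‖ ^ 2 / (2 * (2 / 3) * θ) * p ≤ -(27 / 35) * (‖v‖ ^ 2 - ‖v‖) := by
    have hratio : 27 / 35 ≤ p / (2 * (2 / 3) * θ) := by
      rw [le_div_iff₀ hT]; nlinarith
    calc -‖v - u‖ ^ 2 / (2 * (2 / 3) * θ) * p = -(‖v - u‖ ^ 2 * (p / (2 * (2 / 3) * θ))) := by
          ring
      _ ≤ -(‖v‖ ^ 2 - ‖v‖) * (27 / 35) := by
          rw [neg_mul, neg_le_neg_iff]
          gcongr
          exact norm_sq_sub_norm_le_norm_sub_sq hu v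
      _ = -(27 / 35) * (‖v‖ ^ 2 - ‖v‖) := by ring
  rw [localMaxwellian, mul_rpow (by positivity) (exp_pos _).le, mul_rpow hρ0 (by positivity),
    ← exp_mul]
  calc ρ ^ p * ((2 * π * (2 / 3) * θ) ^ (-(3 / 2) : ℝ)) ^ p
        * exp (-‖v - u‖ ^ 2 / (2 * (2 / 3) * θ) * p)
      ≤ 2 ^ p * 1 * exp (-(27 / 35) * (‖v‖ ^ 2 - ‖v‖)) := by gcongr
    _ = 2 ^ p * exp (-(27 / 35) * (‖v‖ ^ 2 - ‖v‖)) := by rw [mul_one]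

theorem weighted_integrand_le {m a b ϵ ρ θ : ℝ} {u : E}
    (ha : a ≤ 1 / 8) (hϵ : ϵ ≤ 1 / 10) (hρ0 : 0 ≤ ρ) (hρ2 : ρ ≤ 2) (hu : ‖u‖ ≤ 1 / 2)
    (hθ : |θ - 3 / 2| ≤ 1 / 4) (v : E) :
    jBracket v ^ (2 * b) * velocityWeight m a v ^ 2 * (globalMaxwellian v)⁻¹
        * localMaxwellian ρ θ u v ^ (2 * (1 - ϵ))
      ≤ (2 * π) ^ (3 / 2 : ℝ) * 2 ^ (2 * (1 - ϵ))
          * exp (1 / 8 + (|2 * b| + 2 * |2 * m| + 27 / 35) ^ 2 / (2 * (41 / 280)))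
          * exp (-(41 / 560) * ‖v‖ ^ 2) := by
  set r := ‖v‖
  set L := |2 * b| + 2 * |2 * m| + 27 / 35 with hL
  have hpoly : jBracket v ^ (2 * b) * velocityWeight m a v ^ 2
      ≤ exp (|2 * b| * r) * (exp (|2 * m| * r) ^ 2 * exp ((1 + r ^ 2) / 8)) :=
    mul_le_mul (jBracket_rpow_le v _) (velocityWeight_sq_le ha m v) (sq_nonneg _) (exp_pos _).le
  have hexp : exp (|2 * b| * r) * (exp (|2 * m| * r) ^ 2 * exp ((1 + r ^ 2) / 8))
      * exp (r ^ 2 / 2) * exp (-(27 / 35) * (r ^ 2 - r))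
      = exp (1 / 8 + (L * r - 41 / 280 * r ^ 2)) := by
    simp only [sq (exp _), ← exp_add, hL]
    ring_nf
  calc _ ≤ exp (|2 * b| * r) * (exp (|2 * m| * r) ^ 2 * exp ((1 + r ^ 2) / 8))
        * ((2 * π) ^ (3 / 2 : ℝ) * exp (r ^ 2 / 2))
        * (2 ^ (2 * (1 - ϵ)) * exp (-(27 / 35) * (r ^ 2 - r))) := by
        rw [globalMaxwellian_inv]
        gcongr
        · exact rpow_nonneg (localMaxwellian_nonneg hρ0 (by linarith [(abs_le.1 hθ).1]) u v) _
        · exact localMaxwellian_rpow_le hρ0 hρ2 hu hθ (by linarith) v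
    _ = (2 * π) ^ (3 / 2 : ℝ) * 2 ^ (2 * (1 - ϵ)) * exp (1 / 8 + (L * r - 41 / 280 * r ^ 2)) := by
        rw [← hexp]; ring
    _ ≤ (2 * π) ^ (3 / 2 : ℝ) * 2 ^ (2 * (1 - ϵ))
          * exp (1 / 8 + (L ^ 2 / (2 * (41 / 280)) - 41 / 280 / 2 * r ^ 2)) := by
        gcongr _ * exp (1 / 8 + ?_)
        exact mul_sub_mul_sq_le L r (c := 41 / 280) (by norm_num)
    _ = _ := by
        rw [mul_assoc _ (exp (1 / 8 + _)), ← exp_add]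
        ring_nf

end

theorem integral_le_of_le_gaussian {V : Type*} [NormedAddCommGroup V] [InnerProductSpace ℝ V]
    [FiniteDimensional ℝ V] [MeasurableSpace V] [BorelSpace V] {f : V → ℝ} {A c : ℝ}
    (hc : 0 < c) (hf0 : ∀ v, 0 ≤ f v) (hf : ∀ v, f v ≤ A * exp (-c * ‖v‖ ^ 2)) :
    ∫ v, f v ≤ A * (π / c) ^ (Module.finrank ℝ V / 2 : ℝ) := by
  have hgauss : ∫ v : V, exp (-c * ‖v‖ ^ 2) = (π / c) ^ (Module.finrank ℝ V / 2 : ℝ) :=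
    GaussianFourier.integral_rexp_neg_mul_sq_norm hc
  have hint : Integrable fun v : V ↦ exp (-c * ‖v‖ ^ 2) :=
    .of_integral_ne_zero (by rw [hgauss]; positivity)
  calc ∫ v, f v ≤ ∫ v, A * exp (-c * ‖v‖ ^ 2) :=
        integral_mono_of_nonneg (.of_forall hf0) (hint.const_mul A) (.of_forall hf)
    _ = A * (π / c) ^ (Module.finrank ℝ V / 2 : ℝ) := by rw [integral_const_mul, hgauss]

end

theorem weighted_maxwellian_moment_bound_general
    (m q₁ : ℝ) (hq₁8 : q₁ ≤ 1 / 8)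
    (b ϵ : ℝ) (hϵ1 : ϵ ≤ 1 / 10) :
    ∃ C : ℝ, 0 < C ∧ ∀ q₂ : ℝ, 0 < q₂ → ∀ t : ℝ, 0 ≤ t →
      ∀ (ρ θ : ℝ) (u : EuclideanSpace ℝ (Fin 3)),
        0 < ρ → ρ ≤ 2 → ‖u‖ ≤ 1 / 2 → |θ - 3 / 2| ≤ 1 / 4 →
        (∫ v : EuclideanSpace ℝ (Fin 3),
          Real.sqrt (1 + ‖v‖ ^ 2) ^ (2 * b)
          * (Real.sqrt (1 + ‖v‖ ^ 2) ^ (2 * m)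
              * Real.exp ((q₁ / (1 + t) ^ q₂)
                * Real.sqrt (1 + ‖v‖ ^ 2) ^ 2 / 2)) ^ 2
          * ((2 * Real.pi) ^ (-(3 / 2) : ℝ) * Real.exp (-‖v‖ ^ 2 / 2))⁻¹
          * (ρ * (2 * Real.pi * (2 / 3) * θ) ^ (-(3 / 2) : ℝ)
              * Real.exp (-‖v - u‖ ^ 2 / (2 * (2 / 3) * θ))) ^ (2 * (1 - ϵ)))
        ≤ C := by
  set A := (2 * π) ^ (3 / 2 : ℝ) * 2 ^ (2 * (1 - ϵ))
    * exp (1 / 8 + (|2 * b| + 2 * |2 * m| + 27 / 35) ^ 2 / (2 * (41 / 280)))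
  refine ⟨A * (π / (41 / 560)) ^ (Module.finrank ℝ (EuclideanSpace ℝ (Fin 3)) / 2 : ℝ),
    by positivity, fun q₂ hq₂ t ht ρ θ u hρ0 hρ2 hu hθ ↦ ?_⟩
  have hθ0 : 0 < θ := by linarith [(abs_le.1 hθ).1]
  have ha : q₁ / (1 + t) ^ q₂ ≤ 1 / 8 := by
    have hdecay : 1 ≤ (1 + t) ^ q₂ := one_le_rpow (by linarith) hq₂.le
    rw [div_le_iff₀ (by linarith)]
    nlinarith
  exact integral_le_of_le_gaussian (by norm_num) (fun v ↦ by positivity)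
    (weighted_integrand_le ha hϵ1 hρ0.le hρ2 hu hθ)

/-- uniform bound on the weighted velocity integral
`∫ ⟨v⟩^{2b} w² μ⁻¹ M^{2(1−ϵ)} dv` with a constant depending only on
`b, m, ϵ, q₁`. -/
theorem weighted_maxwellian_moment_bound
    (m q₁ : ℝ) (hq₁0 : 0 ≤ q₁) (hq₁8 : q₁ ≤ 1 / 8)
    (b ϵ : ℝ) (hb : 0 ≤ b) (hϵ0 : 0 < ϵ) (hϵ1 : ϵ ≤ 1 / 10) :
    ∃ C : ℝ, 0 < C ∧ ∀ q₂ : ℝ, 0 < q₂ → ∀ t : ℝ, 0 ≤ t →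
      ∀ (ρ θ : ℝ) (u : EuclideanSpace ℝ (Fin 3)),
        0 < ρ → ρ ≤ 2 → ‖u‖ ≤ 1 / 2 → |θ - 3 / 2| ≤ 1 / 4 →
        (∫ v : EuclideanSpace ℝ (Fin 3),
          Real.sqrt (1 + ‖v‖ ^ 2) ^ (2 * b)
          * (Real.sqrt (1 + ‖v‖ ^ 2) ^ (2 * m)
              * Real.exp ((q₁ / (1 + t) ^ q₂)
                * Real.sqrt (1 + ‖v‖ ^ 2) ^ 2 / 2)) ^ 2
          * ((2 * Real.pi) ^ (-(3 / 2) : ℝ) * Real.exp (-‖v‖ ^ 2 / 2))⁻¹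
          * (ρ * (2 * Real.pi * (2 / 3) * θ) ^ (-(3 / 2) : ℝ)
              * Real.exp (-‖v - u‖ ^ 2 / (2 * (2 / 3) * θ))) ^ (2 * (1 - ϵ)))
        ≤ C :=
  weighted_maxwellian_moment_bound_general m q₁ hq₁8 b ϵ hϵ1
end
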